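/- arXiv:1911.06006 — 6 statements merged into one kernel-verified Lean document; each statement's English description precedes it below -/
import Mathlib

section
/- Let $y_1, y_2 > 0$ with $y_2 > 1$, and set $h = \sqrt{y_1 + y_2 - y_1 y_2}$ (assume $y_1 + y_2 > y_1 y_2$ so $h$ is real and positive), and $x_l = \frac{y_2 (h - y_1)^2}{(y_1+y_2)^2}$, $x_r = \frac{y_2 (h + y_1)^2}{(y_1+y_2)^2}$, $\alpha = y_1/y_2$. Then $\int_{x_l}^{x_r} x \cdot \frac{(\alpha+1)\sqrt{(x_r - x)(x - x_l)}}{2\pi y_1 x (1-x)} \, dx = \frac{h^2}{y_2(y_1+y_2)}$. -/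
/-!
Cancelling `x` against the density leaves `(α + 1) / (2π y₁)` times the Cauchy-type integral
`∫_a^b √((b - x)(x - a)) / (c - x) dx = π (c - (a + b)/2 - √((c - a)(c - b)))` at `c = 1`.
After centring, `√(r² - x²) / (d - x)` has the elementary primitive
`-√(r² - x²) + d arcsin (x / r) - √(d² - r²) arcsin ((d x - r²) / (r (d - x)))`;
the Möbius map in the last arcsine sends `±r` to `±1`.
For the Beta edges, `1 - x_l = y₁ (y₂ + h)² / (y₁ + y₂)²` and `1 - x_r = y₁ (y₂ - h)² / (y₁ + y₂)²`,
and `(y₂ + h)(y₂ - h) = (y₂ - 1)(y₁ + y₂)`, so the square root is rational and the rest is algebra.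
-/

open Real Set

lemma HasDerivAt.arcsin_of_one_sub_sq_eq {f : ℝ → ℝ} {f' q x : ℝ} (hf : HasDerivAt f f' x)
    (hq : 0 < q) (hfq : 1 - f x ^ 2 = q ^ 2) :
    HasDerivAt (fun y => arcsin (f y)) (f' / q) x := by
  have hlt : |f x| < 1 := (sq_lt_one_iff_abs_lt_one _).mp (by nlinarith)
  obtain ⟨hneg, hone⟩ := abs_lt.mp hlt
  have := (hasDerivAt_arcsin hneg.ne' hone.ne).comp x hf
  rwa [hfq, sqrt_sq hq.le, one_div_mul_eq_div] at this

section SemicircleCauchy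

variable {r d x : ℝ}

lemma hasDerivAt_neg_sqrt_sq_sub_sq (hx : x ∈ Ioo (-r) r) :
    HasDerivAt (fun y => -√(r ^ 2 - y ^ 2)) (x / √(r ^ 2 - x ^ 2)) x := by
  have hpos : 0 < r ^ 2 - x ^ 2 := by nlinarith [hx.1, hx.2]
  refine (((hasDerivAt_pow 2 x).const_sub (r ^ 2)).sqrt hpos.ne').neg.congr_deriv ?_
  have := (sqrt_pos.mpr hpos).ne'
  field_simp
  ring

lemma hasDerivAt_arcsin_div (hx : x ∈ Ioo (-r) r) :
    HasDerivAt (fun y => arcsin (y / r)) (1 / √(r ^ 2 - x ^ 2)) x := by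
  have hr : 0 < r := by linarith [hx.1, hx.2]
  have hpos : 0 < r ^ 2 - x ^ 2 := by nlinarith [hx.1, hx.2]
  convert ((hasDerivAt_id' x).div_const r).arcsin_of_one_sub_sq_eq
    (q := √(r ^ 2 - x ^ 2) / r) (by positivity) ?_ using 1
  · field_simp
  · rw [div_pow, div_pow, sq_sqrt hpos.le]
    field_simp

lemma hasDerivAt_arcsin_moebius (hrd : r < d) (hx : x ∈ Ioo (-r) r) :
    HasDerivAt (fun y => arcsin ((d * y - r ^ 2) / (r * (d - y))))
      (√(d ^ 2 - r ^ 2) / ((d - x) * √(r ^ 2 - x ^ 2))) x := by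
  have hr : 0 < r := by linarith [hx.1, hx.2]
  have hdx : 0 < d - x := by linarith [hx.2]
  have hs : 0 < r ^ 2 - x ^ 2 := by nlinarith [hx.1, hx.2]
  have hD : 0 < d ^ 2 - r ^ 2 := by nlinarith
  have hw : HasDerivAt (fun y => (d * y - r ^ 2) / (r * (d - y)))
      ((d * (r * (d - x)) - (d * x - r ^ 2) * (-r)) / (r * (d - x)) ^ 2) x := by
    have hnum : HasDerivAt (fun y => d * y - r ^ 2) d x := by
      simpa using ((hasDerivAt_id' x).const_mul d).sub_const (r ^ 2)
    have hden : HasDerivAt (fun y => r * (d - y)) (-r) x := by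
      simpa using ((hasDerivAt_id' x).const_sub d).const_mul r
    exact hnum.div hden (by positivity)
  convert hw.arcsin_of_one_sub_sq_eq
    (q := √(d ^ 2 - r ^ 2) * √(r ^ 2 - x ^ 2) / (r * (d - x))) (by positivity) ?_ using 1
  · have := (sqrt_pos.mpr hs).ne'
    field_simp
    rw [sq_sqrt hD.le]
    ring
  · simp only [div_pow, mul_pow, sq_sqrt hD.le, sq_sqrt hs.le]
    field_simp
    ring

noncomputable def semicircleCauchyPrimitive (r d x : ℝ) : ℝ :=
  -√(r ^ 2 - x ^ 2) + d * arcsin (x / r)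
    - √(d ^ 2 - r ^ 2) * arcsin ((d * x - r ^ 2) / (r * (d - x)))

lemma hasDerivAt_semicircleCauchyPrimitive (hrd : r < d) (hx : x ∈ Ioo (-r) r) :
    HasDerivAt (semicircleCauchyPrimitive r d) (√(r ^ 2 - x ^ 2) / (d - x)) x := by
  have hdx : 0 < d - x := by linarith [hx.2]
  have hs : 0 < r ^ 2 - x ^ 2 := by nlinarith [hx.1, hx.2]
  have hD : 0 ≤ d ^ 2 - r ^ 2 := by nlinarith [hx.1, hx.2]
  refine (((hasDerivAt_neg_sqrt_sq_sub_sq hx).add ((hasDerivAt_arcsin_div hx).const_mul d)).sub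
    ((hasDerivAt_arcsin_moebius hrd hx).const_mul _)).congr_deriv ?_
  have := (sqrt_pos.mpr hs).ne'
  field_simp
  rw [sq_sqrt hD, sq_sqrt hs.le]
  ring

lemma continuousOn_semicircleCauchyPrimitive (hr : 0 < r) (hrd : r < d) :
    ContinuousOn (semicircleCauchyPrimitive r d) (Icc (-r) r) := by
  have hne : ∀ y ∈ Icc (-r) r, r * (d - y) ≠ 0 := fun y hy =>
    mul_ne_zero hr.ne' (by linarith [hy.2])
  unfold semicircleCauchyPrimitive
  fun_prop (disch := assumption)

lemma semicircleCauchyPrimitive_sub (hr : 0 < r) (hrd : r < d) :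
    semicircleCauchyPrimitive r d r - semicircleCauchyPrimitive r d (-r)
      = π * (d - √(d ^ 2 - r ^ 2)) := by
  have h1 : (d * r - r ^ 2) / (r * (d - r)) = 1 := by
    rw [div_eq_one_iff_eq (by nlinarith)]; ring
  have h2 : (d * -r - r ^ 2) / (r * (d - -r)) = -1 := by
    rw [div_eq_iff (by nlinarith)]; ring
  simp only [semicircleCauchyPrimitive, sub_self, neg_sq, h1, h2, div_self hr.ne', neg_div,
    arcsin_one, arcsin_neg, sqrt_zero]
  ring

end SemicircleCauchy

theorem integral_sqrt_sq_sub_sq_div_sub {r d : ℝ} (hr : 0 < r) (hrd : r < d) :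
    ∫ x in -r..r, √(r ^ 2 - x ^ 2) / (d - x) = π * (d - √(d ^ 2 - r ^ 2)) := by
  have hint :
      IntervalIntegrable (fun x => √(r ^ 2 - x ^ 2) / (d - x)) MeasureTheory.volume (-r) r := by
    refine ContinuousOn.intervalIntegrable ?_
    have hne : ∀ y ∈ uIcc (-r) r, d - y ≠ 0 := fun y hy => by
      rw [uIcc_of_le (by linarith)] at hy; linarith [hy.2]
    fun_prop (disch := assumption)
  rw [intervalIntegral.integral_eq_sub_of_hasDerivAt_of_le (by linarith)
    (continuousOn_semicircleCauchyPrimitive hr hrd)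
    (fun x hx => hasDerivAt_semicircleCauchyPrimitive hrd hx) hint,
    semicircleCauchyPrimitive_sub hr hrd]

theorem integral_sqrt_mul_div_sub {a b c : ℝ} (hab : a < b) (hbc : b < c) :
    ∫ x in a..b, √((b - x) * (x - a)) / (c - x)
      = π * (c - (a + b) / 2 - √((c - a) * (c - b))) := by
  set g : ℝ → ℝ := fun t => √(((b - a) / 2) ^ 2 - t ^ 2) / ((c - (a + b) / 2) - t)
  have hshift : ∀ x, √((b - x) * (x - a)) / (c - x) = g (x - (a + b) / 2) := by
    intro x; simp only [g]; ring_nf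
  simp_rw [hshift]
  rw [intervalIntegral.integral_comp_sub_right g,
    show a - (a + b) / 2 = -((b - a) / 2) by ring, show b - (a + b) / 2 = (b - a) / 2 by ring,
    integral_sqrt_sq_sub_sq_div_sub (by linarith) (by linarith)]
  ring_nf

theorem integral_mul_sqrt_div_mul_one_sub {a b K C : ℝ} (ha : 0 ≤ a) (hab : a < b) (hb : b < 1) :
    ∫ x in a..b, x * (K * √((b - x) * (x - a)) / (C * x * (1 - x)))
      = K / C * (π * (1 - (a + b) / 2 - √((1 - a) * (1 - b)))) := by
  have hcancel : ∀ x ∈ Ioc a b, x * (K * √((b - x) * (x - a)) / (C * x * (1 - x)))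
      = K / C * (√((b - x) * (x - a)) / (1 - x)) := by
    intro x hx
    have hx0 : x ≠ 0 := by linarith [hx.1]
    have hx1 : 1 - x ≠ 0 := by linarith [hx.2]
    rcases eq_or_ne C 0 with rfl | hC
    · simp
    · field_simp
  rw [intervalIntegral.integral_congr_ae (MeasureTheory.ae_of_all _ fun x hx =>
      hcancel x (by rwa [uIoc_of_le hab.le] at hx)),
    intervalIntegral.integral_const_mul, integral_sqrt_mul_div_sub hab hb]

theorem stmt_0_general (y1 y2 : ℝ) (hy1 : 0 < y1) (hy2' : 1 < y2)
    (hpos : y1 * y2 < y1 + y2) :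
    let h := Real.sqrt (y1 + y2 - y1 * y2)
    let xl := y2 * (h - y1) ^ 2 / (y1 + y2) ^ 2
    let xr := y2 * (h + y1) ^ 2 / (y1 + y2) ^ 2
    let α := y1 / y2
    (∫ x in xl..xr, x * ((α + 1) * Real.sqrt ((xr - x) * (x - xl)) /
        (2 * π * y1 * x * (1 - x)))) = h ^ 2 / (y2 * (y1 + y2)) := by
  intro h xl xr α
  have hh2 : h ^ 2 = y1 + y2 - y1 * y2 := sq_sqrt (by linarith)
  have hh0 : 0 < h := sqrt_pos.mpr (by linarith)
  have hhy2 : h < y2 := by nlinarith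
  have h1xl : 1 - xl = y1 * (y2 + h) ^ 2 / (y1 + y2) ^ 2 := by
    simp only [xl]; field_simp; linear_combination (-(y1 + y2)) * hh2
  have h1xr : 1 - xr = y1 * (y2 - h) ^ 2 / (y1 + y2) ^ 2 := by
    simp only [xr]; field_simp; linear_combination (-(y1 + y2)) * hh2
  have hxlxr : xl < xr := by
    have : (h - y1) ^ 2 < (h + y1) ^ 2 := by nlinarith
    simp only [xl, xr]; gcongr
  have hxr1 : xr < 1 := by
    have : 0 < 1 - xr := by rw [h1xr]; have := sub_pos.mpr hhy2; positivity
    linarith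
  have hedges : √((1 - xl) * (1 - xr)) = y1 * (y2 - 1) / (y1 + y2) := by
    rw [h1xl, h1xr, sqrt_eq_iff_mul_self_eq_of_pos (by positivity)]
    field_simp
    linear_combination (2 * y2 ^ 2 - h ^ 2 - (y1 + y2 - y1 * y2)) * hh2
  rw [integral_mul_sqrt_div_mul_one_sub (by positivity) hxlxr hxr1, hedges]
  simp only [α, xl, xr]
  field_simp
  linear_combination (-2 * y2 - 4 * y1) * hh2

theorem stmt_0 (y1 y2 : ℝ) (hy1 : 0 < y1) (hy2 : 0 < y2) (hy2' : 1 < y2)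
    (hpos : y1 * y2 < y1 + y2) :
    let h := Real.sqrt (y1 + y2 - y1 * y2)
    let xl := y2 * (h - y1) ^ 2 / (y1 + y2) ^ 2
    let xr := y2 * (h + y1) ^ 2 / (y1 + y2) ^ 2
    let α := y1 / y2
    (∫ x in xl..xr, x * ((α + 1) * Real.sqrt ((xr - x) * (x - xl)) /
        (2 * π * y1 * x * (1 - x)))) = h ^ 2 / (y2 * (y1 + y2)) :=
  stmt_0_general y1 y2 hy1 hy2' hpos
end

section
/- Let $y_1, y_2 > 0$ with $y_2 > 1$, $h = \sqrt{y_1+y_2-y_1y_2} > 0$, so that $y_2 > h$. Then for the contour integral over the unit circle, $\frac{y_2 h^2 i}{4\pi(y_1+y_2)}\oint_{|\xi|=1}\frac{(\xi^2-1)^2}{\xi^3 |y_2 - h\xi|^2}\,d\xi = \frac{h^2}{y_2(y_1+y_2)}$, where on $|\xi|=1$ we interpret $|y_2-h\xi|^2 = (y_2-h\xi)(y_2 - h/\xi)$. -/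
/-!
After clearing the `1/ξ` in `|y₂ - hξ|² = (y₂ - hξ)(y₂ - h/ξ)`, the integrand is a rational
function with a double pole at `0` and simple poles at `h/y₂` (inside the unit disc, as `h < y₂`)
and `y₂/h` (outside). Its partial fraction decomposition integrates term by term: the part
`1 + ξ⁻²` has the primitive `ξ - ξ⁻¹`, and the simple poles contribute `2πi` times their
residues when inside the disc and nothing when outside. The two residues inside add up to
`-2/y₂²`, so the contour integral is `-4πi/y₂²`.
-/

open Real Complex Metric Set

theorem circleIntegral_sub_inv_of_notMem_closedBall {c w : ℂ} {R : ℝ} (hR : 0 ≤ R)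
    (hw : w ∉ closedBall c R) : (∮ z in C(c, R), (z - w)⁻¹) = 0 := by
  refine DiffContOnCl.circleIntegral_eq_zero hR
    (DifferentiableOn.diffContOnCl_ball (U := {w}ᶜ) ?_ fun z hz (h : z = w) => hw (h ▸ hz))
  exact (differentiable_id.sub_const w).differentiableOn.inv fun z hz => sub_ne_zero.2 hz

theorem circleIntegral_one_add_inv_sq : (∮ ξ in C(0, 1), (1 + (ξ ^ 2)⁻¹ : ℂ)) = 0 := by
  refine circleIntegral.integral_eq_zero_of_hasDerivWithinAt zero_le_one
    (f := fun z => z - z⁻¹) fun z hz => ?_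
  simpa using ((hasDerivAt_id' z).fun_sub
    (hasDerivAt_inv (ne_zero_of_mem_sphere one_ne_zero ⟨z, hz⟩))).hasDerivWithinAt

theorem circleIntegral_unit_partialFractions (A B C : ℂ) {a b : ℂ} (ha : a ∈ ball (0 : ℂ) 1)
    (hb : b ∉ closedBall (0 : ℂ) 1) :
    (∮ ξ in C(0, 1), A * (1 + (ξ ^ 2)⁻¹) - B * ξ⁻¹ + C * ((ξ - a)⁻¹ - (ξ - b)⁻¹)) =
      2 * π * I * (C - B) := by
  have hinv : ∀ w ∉ sphere (0 : ℂ) 1, CircleIntegrable (fun z => (z - w)⁻¹) 0 1 := by simp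
  have ha' := hinv a fun h => (mem_ball_zero_iff.1 ha).ne (mem_sphere_zero_iff_norm.1 h)
  have hb' := hinv b fun h => hb (sphere_subset_closedBall h)
  have h0 : CircleIntegrable (fun z : ℂ => z⁻¹) 0 1 := by simpa using hinv 0 (by simp)
  have h1 : CircleIntegrable (fun z : ℂ => 1 + (z ^ 2)⁻¹) 0 1 :=
    ContinuousOn.circleIntegrable zero_le_one <| continuousOn_const.add <|
      (continuousOn_pow 2).inv₀ fun z hz =>
        pow_ne_zero 2 (ne_zero_of_mem_sphere one_ne_zero ⟨z, hz⟩)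
  have hA : CircleIntegrable (fun z : ℂ => A * (1 + (z ^ 2)⁻¹)) 0 1 := h1.const_fun_smul
  have hB : CircleIntegrable (fun z : ℂ => B * z⁻¹) 0 1 := h0.const_fun_smul
  have hC : CircleIntegrable (fun z : ℂ => C * ((z - a)⁻¹ - (z - b)⁻¹)) 0 1 :=
    (ha'.sub hb').const_fun_smul
  have h2πi : (∮ z in C(0, 1), z⁻¹) = 2 * π * I := by
    simpa using circleIntegral.integral_sub_center_inv (0 : ℂ) one_ne_zero
  rw [circleIntegral.integral_add (hA.fun_sub hB) hC, circleIntegral.integral_sub hA hB]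
  simp only [circleIntegral.integral_const_mul, circleIntegral.integral_sub ha' hb']
  rw [circleIntegral_one_add_inv_sq, circleIntegral.integral_sub_inv_of_mem_ball ha,
    circleIntegral_sub_inv_of_notMem_closedBall zero_le_one hb, h2πi]
  ring

theorem betaIntegrand_eq_partialFractions {H Y ξ : ℂ} (hH : H ≠ 0) (hY : Y ≠ 0) (hξ : ξ ≠ 0)
    (hξH : ξ * H ≠ Y) (hξY : ξ * Y ≠ H) :
    (ξ ^ 2 - 1) ^ 2 / (ξ ^ 3 * ((Y - H * ξ) * (Y - H / ξ))) =
      -1 / (H * Y) * (1 + (ξ ^ 2)⁻¹) - (H ^ 2 + Y ^ 2) / (H ^ 2 * Y ^ 2) * ξ⁻¹ +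
        (Y ^ 2 - H ^ 2) / (H ^ 2 * Y ^ 2) * ((ξ - H / Y)⁻¹ - (ξ - Y / H)⁻¹) := by
  have h₁ : Y - ξ * H ≠ 0 := sub_ne_zero.2 hξH.symm
  have h₂ : ξ * Y - H ≠ 0 := sub_ne_zero.2 hξY
  have h₃ : ξ * H - Y ≠ 0 := sub_ne_zero.2 hξH
  field_simp
  ring

theorem circleIntegral_betaIntegrand {H Y : ℂ} (hH : H ≠ 0) (hHY : ‖H‖ < ‖Y‖) :
    (∮ ξ in C(0, 1), (ξ ^ 2 - 1) ^ 2 / (ξ ^ 3 * ((Y - H * ξ) * (Y - H / ξ)))) =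
      -4 * π * I / Y ^ 2 := by
  have hY₀ : 0 < ‖Y‖ := (norm_nonneg H).trans_lt hHY
  have hY : Y ≠ 0 := norm_pos_iff.1 hY₀
  have hin : H / Y ∈ ball (0 : ℂ) 1 := by
    rwa [mem_ball_zero_iff, norm_div, div_lt_one hY₀]
  have hout : Y / H ∉ closedBall (0 : ℂ) 1 := by
    rwa [mem_closedBall_zero_iff, norm_div, div_le_one (norm_pos_iff.2 hH), not_le]
  calc
    _ = ∮ ξ in C(0, 1), -1 / (H * Y) * (1 + (ξ ^ 2)⁻¹) - (H ^ 2 + Y ^ 2) / (H ^ 2 * Y ^ 2) * ξ⁻¹ +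
          (Y ^ 2 - H ^ 2) / (H ^ 2 * Y ^ 2) * ((ξ - H / Y)⁻¹ - (ξ - Y / H)⁻¹) := by
      refine circleIntegral.integral_congr zero_le_one fun ξ hξ => ?_
      rw [mem_sphere_zero_iff_norm] at hξ
      refine betaIntegrand_eq_partialFractions hH hY (norm_ne_zero_iff.1 (by simp [hξ])) ?_ ?_
      · exact fun h => hHY.ne (by rw [← h, norm_mul, hξ, one_mul])
      · exact fun h => hHY.ne' (by rw [← h, norm_mul, hξ, one_mul])
    _ = 2 * π * I * ((Y ^ 2 - H ^ 2) / (H ^ 2 * Y ^ 2) - (H ^ 2 + Y ^ 2) / (H ^ 2 * Y ^ 2)) :=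
      circleIntegral_unit_partialFractions _ _ _ hin hout
    _ = -4 * π * I / Y ^ 2 := by
      field_simp
      ring

theorem stmt_6 (y1 y2 : ℝ) (hy1 : 0 < y1) (hy2 : 0 < y2) (hy2' : 1 < y2)
    (hpos : 0 < y1 + y2 - y1 * y2) :
    let h := Real.sqrt (y1 + y2 - y1 * y2)
    ((y2 : ℂ) * (h : ℂ) ^ 2 * Complex.I / (4 * (π : ℂ) * ((y1 : ℂ) + y2))) *
      (∮ ξ in C(0, 1), (ξ ^ 2 - 1) ^ 2 /
        (ξ ^ 3 * (((y2 : ℂ) - (h : ℂ) * ξ) * ((y2 : ℂ) - (h : ℂ) / ξ)))) =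
    (h : ℂ) ^ 2 / ((y2 : ℂ) * ((y1 : ℂ) + y2)) := by
  intro h
  have hh : 0 < h := Real.sqrt_pos.mpr hpos
  have hhy : h < y2 := by
    rw [Real.sqrt_lt' hy2]
    nlinarith
  have hnorm : ‖(h : ℂ)‖ < ‖(y2 : ℂ)‖ := by
    rwa [norm_real, norm_real, Real.norm_of_nonneg hh.le, Real.norm_of_nonneg hy2.le]
  rw [circleIntegral_betaIntegrand (ofReal_ne_zero.2 hh.ne') hnorm]
  have hy2c : (y2 : ℂ) ≠ 0 := ofReal_ne_zero.2 hy2.ne'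
  have hsum : (y1 : ℂ) + y2 ≠ 0 := by exact_mod_cast (add_pos hy1 hy2).ne'
  field_simp
  linear_combination -(h : ℂ) ^ 2 * I_mul_I
end

section
/- Let $y_1, y_2 > 0$ with $y_2 < 1$, $h = \sqrt{y_1+y_2-y_1y_2} > 0$, so that $y_2 < h$. Then $\frac{y_2 h^2 i}{4\pi(y_1+y_2)}\oint_{|\xi|=1}\frac{(\xi^2-1)^2}{\xi^3 (y_2-h\xi)(y_2 - h/\xi)}\,d\xi = \frac{y_2}{y_1+y_2}$. -/
open Real Complex Metric

private lemma circleIntegral_add' {f g : ℂ → ℂ} {c : ℂ} {R : ℝ}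
    (hf : CircleIntegrable f c R) (hg : CircleIntegrable g c R) :
    (∮ z in C(c, R), (f z + g z)) = (∮ z in C(c, R), f z) + ∮ z in C(c, R), g z := by
  simp only [circleIntegral, smul_add, intervalIntegral.integral_add hf.out hg.out]

private lemma frac_id (x u v : ℂ) (huv : u * v = 1) (hx : x ≠ 0) (hu : x - u ≠ 0)
    (hv : x - v ≠ 0) :
    (x ^ 2 - 1) ^ 2 / (x ^ 2 * ((x - u) * (x - v))) =
      1 + (u + v) / x + 1 / x ^ 2 + (u - v) / (x - u) + (v - u) / (x - v) := by
  rw [add_div' _ _ _ hx, div_add_div _ _ hx (pow_ne_zero 2 hx),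
    div_add_div _ _ (mul_ne_zero hx (pow_ne_zero 2 hx)) hu,
    div_add_div _ _ (mul_ne_zero (mul_ne_zero hx (pow_ne_zero 2 hx)) hu) hv,
    div_eq_div_iff (mul_ne_zero (pow_ne_zero 2 hx) (mul_ne_zero hu hv))
      (mul_ne_zero (mul_ne_zero (mul_ne_zero hx (pow_ne_zero 2 hx)) hu) hv)]
  linear_combination ((3 * x ^ 2 - (u + v) * x - 1) * (x * x ^ 2 * ((x - u) * (x - v)))) * huv

theorem stmt_7 (y1 y2 : ℝ) (hy1 : 0 < y1) (hy2 : 0 < y2) (hy2' : y2 < 1) :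
    let h := Real.sqrt (y1 + y2 - y1 * y2)
    ((y2 : ℂ) * (h : ℂ) ^ 2 * Complex.I / (4 * (π : ℂ) * ((y1 : ℂ) + y2))) *
      (∮ ξ in C(0, 1), (ξ ^ 2 - 1) ^ 2 /
        (ξ ^ 3 * (((y2 : ℂ) - (h : ℂ) * ξ) * ((y2 : ℂ) - (h : ℂ) / ξ)))) =
    (y2 : ℂ) / ((y1 : ℂ) + y2) := by
  intro h
  have hpos : 0 < y1 + y2 - y1 * y2 := by nlinarith
  have hh : 0 < h := Real.sqrt_pos.mpr hpos
  have hsq : h ^ 2 = y1 + y2 - y1 * y2 := Real.sq_sqrt hpos.le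
  have hy2h : y2 < h := by nlinarith [Real.sq_sqrt hpos.le, Real.sqrt_nonneg (y1 + y2 - y1 * y2)]
  set H : ℂ := (h : ℂ) with hHdef
  set Y : ℂ := (y2 : ℂ) with hYdef
  have hHne : H ≠ 0 := by
    simp only [hHdef, ne_eq, Complex.ofReal_eq_zero]; positivity
  have hYne : Y ≠ 0 := by
    simp only [hYdef, ne_eq, Complex.ofReal_eq_zero]; positivity
  set a : ℂ := Y / H with hadef
  set b : ℂ := H / Y with hbdef
  have hanorm : ‖a‖ < 1 := by
    rw [hadef, norm_div, hHdef, hYdef, Complex.norm_real, Complex.norm_real,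
      Real.norm_of_nonneg hy2.le, Real.norm_of_nonneg hh.le]
    rw [div_lt_one hh]; exact hy2h
  have hbnorm : 1 < ‖b‖ := by
    rw [hbdef, norm_div, hHdef, hYdef, Complex.norm_real, Complex.norm_real,
      Real.norm_of_nonneg hy2.le, Real.norm_of_nonneg hh.le]
    rw [lt_div_iff₀ hy2]; simpa using hy2h
  set k : ℂ := -(1 / (H * Y)) with hkdef
  -- the five pieces
  set f1 : ℂ → ℂ := fun ξ => k * (ξ - 0) ^ (0 : ℤ) with hf1
  set f2 : ℂ → ℂ := fun ξ => (k * (a + b)) * (ξ - 0) ^ (-1 : ℤ) with hf2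
  set f3 : ℂ → ℂ := fun ξ => k * (ξ - 0) ^ (-2 : ℤ) with hf3
  set f4 : ℂ → ℂ := fun ξ => (k * (a - b)) * (ξ - a) ^ (-1 : ℤ) with hf4
  set f5 : ℂ → ℂ := fun ξ => (k * (b - a)) * (ξ - b) ^ (-1 : ℤ) with hf5
  -- nonvanishing on the sphere
  have hmem : ∀ ξ ∈ sphere (0 : ℂ) 1, ξ ≠ 0 ∧ ξ - a ≠ 0 ∧ ξ - b ≠ 0 := by
    intro ξ hξ
    rw [mem_sphere_zero_iff_norm] at hξ
    refine ⟨?_, ?_, ?_⟩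
    · intro h0; rw [h0] at hξ; simp at hξ
    · intro h0; apply absurd hanorm; rw [sub_eq_zero] at h0; rw [← h0, hξ]; simp
    · intro h0; apply absurd hbnorm; rw [sub_eq_zero] at h0; rw [← h0, hξ]; simp
  -- pointwise identity on the sphere
  have hEq : Set.EqOn (fun ξ : ℂ => (ξ ^ 2 - 1) ^ 2 /
      (ξ ^ 3 * ((Y - H * ξ) * (Y - H / ξ)))) (fun ξ => f1 ξ + f2 ξ + f3 ξ + f4 ξ + f5 ξ)
      (sphere (0 : ℂ) 1) := by
    intro ξ hξ
    obtain ⟨hξ0, hξa, hξb⟩ := hmem ξ hξ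
    have ha : a * H = Y := by rw [hadef]; field_simp
    have hb : b * Y = H := by rw [hbdef]; field_simp
    have hab : a * b = 1 := by rw [hadef, hbdef]; field_simp
    have e4 : Y - H * ξ = -(H * (ξ - a)) := by linear_combination -ha
    have e3 : Y - H / ξ = Y * (ξ - b) / ξ := by
      rw [eq_div_iff hξ0, sub_mul, div_mul_cancel₀ _ hξ0]
      linear_combination hb
    have edenom : ξ ^ 3 * (-(H * (ξ - a)) * (Y * (ξ - b) / ξ))
        = (H * Y) * -(ξ ^ 2 * ((ξ - a) * (ξ - b))) := by
      field_simp
    have aux : ∀ (N D : ℂ), D ≠ 0 → N / ((H * Y) * -D) = -(1 / (H * Y)) * (N / D) := by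
      intro N D hD
      field_simp
    have main : (ξ ^ 2 - 1) ^ 2 / (ξ ^ 3 * ((Y - H * ξ) * (Y - H / ξ)))
        = k * ((ξ ^ 2 - 1) ^ 2 / (ξ ^ 2 * ((ξ - a) * (ξ - b)))) := by
      rw [e4, e3, edenom, hkdef]
      exact aux _ _ (mul_ne_zero (pow_ne_zero 2 hξ0) (mul_ne_zero hξa hξb))
    show (ξ ^ 2 - 1) ^ 2 / (ξ ^ 3 * ((Y - H * ξ) * (Y - H / ξ)))
        = f1 ξ + f2 ξ + f3 ξ + f4 ξ + f5 ξ
    rw [main, frac_id ξ a b hab hξ0 hξa hξb]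
    simp only [hf1, hf2, hf3, hf4, hf5, zpow_neg, zpow_one, zpow_zero, sub_zero, zpow_ofNat]
    ring
  -- integrability of each piece
  have hint : ∀ (c w : ℂ) (n : ℤ), w ∉ sphere (0:ℂ) 1 →
      CircleIntegrable (fun ξ => c * (ξ - w) ^ n) 0 1 := by
    intro c w n hw
    apply ContinuousOn.circleIntegrable (by norm_num)
    apply ContinuousOn.mul continuousOn_const
    apply ContinuousOn.zpow₀ (by fun_prop)
    intro ξ hξ
    left
    rw [sub_ne_zero]
    rintro rfl
    exact hw hξ
  have h0s : (0 : ℂ) ∉ sphere (0:ℂ) 1 := by simp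
  have has : a ∉ sphere (0:ℂ) 1 := by
    rw [mem_sphere_zero_iff_norm]; exact ne_of_lt hanorm
  have hbs : b ∉ sphere (0:ℂ) 1 := by
    rw [mem_sphere_zero_iff_norm]; exact (ne_of_gt hbnorm)
  have hi1 := hint k 0 0 h0s
  have hi2 := hint (k * (a + b)) 0 (-1) h0s
  have hi3 := hint k 0 (-2) h0s
  have hi4 := hint (k * (a - b)) a (-1) has
  have hi5 := hint (k * (b - a)) b (-1) hbs
  -- compute each integral
  have hv1 : (∮ ξ in C(0, 1), f1 ξ) = 0 := by
    have := circleIntegral.integral_smul (𝕜 := ℂ) k (fun ξ => (ξ - 0) ^ (0 : ℤ)) 0 1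
    simp only [smul_eq_mul] at this
    rw [hf1]
    simp only []
    rw [this, circleIntegral.integral_sub_zpow_of_ne (by decide) 0 0 1, mul_zero]
  have hv2 : (∮ ξ in C(0, 1), f2 ξ) = (k * (a + b)) * (2 * π * Complex.I) := by
    have := circleIntegral.integral_smul (𝕜 := ℂ) (k * (a + b))
      (fun ξ => (ξ - 0) ^ (-1 : ℤ)) 0 1
    simp only [smul_eq_mul] at this
    rw [hf2, this]
    congr 1
    have h0b : (0 : ℂ) ∈ ball (0 : ℂ) 1 := by simp
    simpa using circleIntegral.integral_sub_inv_of_mem_ball h0b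
  have hv3 : (∮ ξ in C(0, 1), f3 ξ) = 0 := by
    have := circleIntegral.integral_smul (𝕜 := ℂ) k (fun ξ => (ξ - 0) ^ (-2 : ℤ)) 0 1
    simp only [smul_eq_mul] at this
    rw [hf3, this, circleIntegral.integral_sub_zpow_of_ne (by decide) 0 0 1, mul_zero]
  have hv4 : (∮ ξ in C(0, 1), f4 ξ) = (k * (a - b)) * (2 * π * Complex.I) := by
    have := circleIntegral.integral_smul (𝕜 := ℂ) (k * (a - b))
      (fun ξ => (ξ - a) ^ (-1 : ℤ)) 0 1
    simp only [smul_eq_mul] at this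
    rw [hf4, this]
    congr 1
    have hab : a ∈ ball (0 : ℂ) 1 := by rwa [mem_ball_zero_iff]
    simpa using circleIntegral.integral_sub_inv_of_mem_ball hab
  have hv5 : (∮ ξ in C(0, 1), f5 ξ) = 0 := by
    have hb0 : ∀ z ∈ closedBall (0 : ℂ) 1, z - b ≠ 0 := by
      intro z hz
      rw [mem_closedBall_zero_iff] at hz
      rw [sub_ne_zero]
      rintro rfl
      exact absurd hbnorm (not_lt.mpr hz)
    apply Complex.circleIntegral_eq_zero_of_differentiable_on_off_countable
      (zero_le_one) (Set.countable_empty) (f := f5)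
    · rw [hf5]
      apply ContinuousOn.mul continuousOn_const
      apply ContinuousOn.zpow₀ (by fun_prop)
      intro z hz; left; exact hb0 z hz
    · intro z hz
      rw [hf5]
      apply DifferentiableAt.mul (differentiableAt_const _)
      exact DifferentiableAt.comp z
        (differentiableAt_zpow.mpr (Or.inl (hb0 z (ball_subset_closedBall hz.1))))
        (differentiableAt_id.sub (differentiableAt_const b))
  -- put it together
  have hsplit : (∮ ξ in C(0, 1), (ξ ^ 2 - 1) ^ 2 /
      (ξ ^ 3 * ((Y - H * ξ) * (Y - H / ξ)))) =
      (∮ ξ in C(0,1), f1 ξ) + (∮ ξ in C(0,1), f2 ξ) + (∮ ξ in C(0,1), f3 ξ)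
        + (∮ ξ in C(0,1), f4 ξ) + (∮ ξ in C(0,1), f5 ξ) := by
    have s4 : (∮ z in C(0,1), (f1 z + f2 z + f3 z + f4 z) + f5 z)
        = (∮ z in C(0,1), f1 z + f2 z + f3 z + f4 z) + ∮ z in C(0,1), f5 z :=
      circleIntegral_add' (((hi1.add hi2).add hi3).add hi4) hi5
    have s3 : (∮ z in C(0,1), (f1 z + f2 z + f3 z) + f4 z)
        = (∮ z in C(0,1), f1 z + f2 z + f3 z) + ∮ z in C(0,1), f4 z :=
      circleIntegral_add' ((hi1.add hi2).add hi3) hi4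
    have s2 : (∮ z in C(0,1), (f1 z + f2 z) + f3 z)
        = (∮ z in C(0,1), f1 z + f2 z) + ∮ z in C(0,1), f3 z :=
      circleIntegral_add' (hi1.add hi2) hi3
    have s1 : (∮ z in C(0,1), f1 z + f2 z)
        = (∮ z in C(0,1), f1 z) + ∮ z in C(0,1), f2 z :=
      circleIntegral_add' hi1 hi2
    rw [circleIntegral.integral_congr zero_le_one hEq, s4, s3, s2, s1]
  have hπ : (π : ℂ) ≠ 0 := by simp [Real.pi_ne_zero]
  have hy1y2 : (y1 : ℂ) + (y2 : ℂ) ≠ 0 := by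
    rw [← Complex.ofReal_add]
    simp only [ne_eq, Complex.ofReal_eq_zero]
    positivity
  have hval : k * (a + b) * (2 * ↑π * I) + k * (a - b) * (2 * ↑π * I)
      = -(4 * ↑π * I) / H ^ 2 := by
    have e : k * (a + b) * (2 * ↑π * I) + k * (a - b) * (2 * ↑π * I)
        = (2 * k * a) * (2 * ↑π * I) := by ring
    rw [e, hkdef, hadef, eq_div_iff (pow_ne_zero 2 hHne)]
    field_simp
    ring
  rw [hsplit, hv1, hv2, hv3, hv4, hv5, zero_add, add_zero, add_zero, hval]
  rw [div_mul_div_comm]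
  rw [div_eq_div_iff (mul_ne_zero (by exact mul_ne_zero (mul_ne_zero (by norm_num) hπ) hy1y2)
    (pow_ne_zero 2 hHne)) hy1y2]
  linear_combination (-(4 * (π : ℂ) * Y * H ^ 2 * ((y1:ℂ) + (y2:ℂ)))) * Complex.I_sq
end

section
/- Let $h, y_1, y_2 > 0$ with $h^2 = y_1 + y_2 - y_1 y_2$ and $y_2 > 1$ (so $h < y_2$). For $r > 1$, define $g_r(\xi) = \frac{(\xi + \frac{1}{hr})(\xi + \frac{h}{r})}{(\xi + \frac{y_2}{hr})(\xi + \frac{h}{y_2 r})}$. Then $\lim_{r \downarrow 1} \frac{1}{4\pi i}\oint_{|\xi|=1} g_r(\xi)\left(\frac{1}{\xi - \frac{1}{r}} + \frac{1}{\xi + \frac{1}{r}} - \frac{2}{\xi + \frac{h}{y_2 r}}\right) d\xi = 0$. -/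
/-! With `a = 1/r`, `b = h/(y₂ r)`, `c = y₂/(h r)` we have `c b = a²`, so the bracket equals
`2b(ξ + c)/((ξ - a)(ξ + a)(ξ + b))` and the pole of `g_r` at `-c` cancels. What is left is a
quadratic over a quartic whose poles `±a`, `-b` lie inside the unit circle; the substitution
`ξ ↦ ξ⁻¹` turns it into a function holomorphic on the closed unit disc. Hence the integral is
exactly `0` for every `1 < r < y₂/h`. -/

open Real Complex Filter Topology Metric

theorem circleIntegral_zero_eq_inv {E : Type*} [NormedAddCommGroup E] [NormedSpace ℂ E]
    (f : ℂ → E) (R : ℝ) :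
    ∮ z in C(0, R), f z = ∮ z in C(0, R⁻¹), (z ^ 2)⁻¹ • f z⁻¹ := by
  have hperiodic : Function.Periodic
      (fun θ ↦ deriv (circleMap 0 R) θ • f (circleMap 0 R θ)) (2 * π) := fun θ ↦ by
    simp [periodic_circleMap 0 R θ]
  calc ∮ z in C(0, R), f z
      = ∫ θ in 0..2 * π, deriv (circleMap 0 R) (-θ) • f (circleMap 0 R (-θ)) := by
        rw [intervalIntegral.integral_comp_neg
          (fun θ ↦ deriv (circleMap 0 R) θ • f (circleMap 0 R θ))]
        simpa [circleIntegral] using (hperiodic.intervalIntegral_add_eq (-(2 * π)) 0).symm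
    _ = ∮ z in C(0, R⁻¹), (z ^ 2)⁻¹ • f z⁻¹ := by
        refine intervalIntegral.integral_congr fun θ _ ↦ ?_
        have hinv : (circleMap 0 R⁻¹ θ)⁻¹ = circleMap 0 R (-θ) := by
          rw [circleMap_zero_inv, inv_inv]
        rw [deriv_circleMap, deriv_circleMap, smul_smul, ← hinv]
        congr 1
        rcases eq_or_ne (circleMap 0 R⁻¹ θ) 0 with h0 | h0
        · simp [h0]
        · field_simp

lemma one_sub_mul_ne_zero_of_mem_closedBall {R : ℝ} {a w : ℂ} (ha : ‖a‖ < R)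
    (hw : w ∈ closedBall (0 : ℂ) R⁻¹) : 1 - a * w ≠ 0 := by
  have hR : 0 < R := (norm_nonneg a).trans_lt ha
  rw [mem_closedBall_zero_iff] at hw
  refine sub_ne_zero.mpr fun h ↦ ?_
  have : ‖a * w‖ < 1 := calc
    ‖a * w‖ = ‖a‖ * ‖w‖ := norm_mul a w
    _ ≤ ‖a‖ * R⁻¹ := by gcongr
    _ < R * R⁻¹ := by gcongr
    _ = 1 := mul_inv_cancel₀ hR.ne'
  rw [← h, norm_one] at this
  exact this.false

theorem circleIntegral_quadratic_div_quartic_eq_zero {R : ℝ} {u v a b c d : ℂ} (ha : ‖a‖ < R)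
    (hb : ‖b‖ < R) (hc : ‖c‖ < R) (hd : ‖d‖ < R) :
    ∮ z in C(0, R), (z - u) * (z - v) / ((z - a) * (z - b) * (z - c) * (z - d)) = 0 := by
  have hR : 0 < R := (norm_nonneg a).trans_lt ha
  set G : ℂ → ℂ := fun w ↦
    (1 - u * w) * (1 - v * w) / ((1 - a * w) * (1 - b * w) * (1 - c * w) * (1 - d * w))
  have hG : ∀ w ∈ closedBall (0 : ℂ) R⁻¹, DifferentiableAt ℂ G w := fun w hw ↦ by
    have := one_sub_mul_ne_zero_of_mem_closedBall ha hw
    have := one_sub_mul_ne_zero_of_mem_closedBall hb hw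
    have := one_sub_mul_ne_zero_of_mem_closedBall hc hw
    have := one_sub_mul_ne_zero_of_mem_closedBall hd hw
    simp only [G]
    fun_prop (disch := simp [*])
  have hEq : Set.EqOn (fun w ↦ (w ^ 2)⁻¹ • ((w⁻¹ - u) * (w⁻¹ - v) /
      ((w⁻¹ - a) * (w⁻¹ - b) * (w⁻¹ - c) * (w⁻¹ - d)))) G (sphere 0 R⁻¹) := fun w hw ↦ by
    have hw0 : w ≠ 0 := ne_of_mem_sphere hw (inv_ne_zero hR.ne')
    have hw' := sphere_subset_closedBall hw
    have := one_sub_mul_ne_zero_of_mem_closedBall ha hw'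
    have := one_sub_mul_ne_zero_of_mem_closedBall hb hw'
    have := one_sub_mul_ne_zero_of_mem_closedBall hc hw'
    have := one_sub_mul_ne_zero_of_mem_closedBall hd hw'
    simp only [G, smul_eq_mul]
    field_simp
  rw [circleIntegral_zero_eq_inv, circleIntegral.integral_congr (by positivity) hEq]
  exact circleIntegral_eq_zero_of_differentiable_on_off_countable (by positivity)
    Set.countable_empty (fun w hw ↦ (hG w hw).continuousAt.continuousWithinAt)
    fun w hw ↦ hG w (ball_subset_closedBall hw.1)

lemma one_div_sub_add_one_div_add_sub_two_div {a b c ξ : ℂ} (hcb : c * b = a ^ 2)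
    (h₁ : ξ - a ≠ 0) (h₂ : ξ + a ≠ 0) (h₃ : ξ + b ≠ 0) :
    1 / (ξ - a) + 1 / (ξ + a) - 2 / (ξ + b) = 2 * b * (ξ + c) / ((ξ - a) * (ξ + a) * (ξ + b)) := by
  field_simp
  linear_combination -2 * hcb

lemma sub_ne_zero_of_mem_sphere_of_norm_ne {ξ w : ℂ} {R : ℝ} (hξ : ξ ∈ sphere (0 : ℂ) R)
    (hw : ‖w‖ ≠ R) : ξ - w ≠ 0 :=
  sub_ne_zero.mpr fun h ↦ hw (mem_sphere_zero_iff_norm.mp (h ▸ hξ))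

theorem circleIntegral_eq_zero_of_mul_eq_sq {a b c u v : ℂ} (ha : ‖a‖ < 1) (hb : ‖b‖ < 1)
    (hc : ‖c‖ ≠ 1) (hcb : c * b = a ^ 2) :
    ∮ ξ in C(0, 1), (ξ + u) * (ξ + v) / ((ξ + c) * (ξ + b)) *
      (1 / (ξ - a) + 1 / (ξ + a) - 2 / (ξ + b)) = 0 := by
  have hEq : Set.EqOn
      (fun ξ ↦ (ξ + u) * (ξ + v) / ((ξ + c) * (ξ + b)) * (1 / (ξ - a) + 1 / (ξ + a) - 2 / (ξ + b)))
      (fun ξ ↦ 2 * b * ((ξ - -u) * (ξ - -v) / ((ξ - a) * (ξ - -a) * (ξ - -b) * (ξ - -b))))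
      (sphere 0 1) := fun ξ hξ ↦ by
    have h₁ := sub_ne_zero_of_mem_sphere_of_norm_ne hξ ha.ne
    have h₂ := sub_ne_zero_of_mem_sphere_of_norm_ne hξ (w := -a) (by rw [norm_neg]; exact ha.ne)
    have h₃ := sub_ne_zero_of_mem_sphere_of_norm_ne hξ (w := -b) (by rw [norm_neg]; exact hb.ne)
    have h₄ := sub_ne_zero_of_mem_sphere_of_norm_ne hξ (w := -c) (by rwa [norm_neg])
    simp only [sub_neg_eq_add] at h₂ h₃ h₄ ⊢
    rw [one_div_sub_add_one_div_add_sub_two_div hcb h₁ h₂ h₃]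
    field_simp
  rw [circleIntegral.integral_congr zero_le_one hEq, circleIntegral.integral_const_mul,
    circleIntegral_quadratic_div_quartic_eq_zero ha (by rwa [norm_neg]) (by rwa [norm_neg])
      (by rwa [norm_neg]), mul_zero]

theorem stmt_9_general (y1 y2 h : ℝ) (hy1 : 0 < y1) (hh : 0 < h)
    (hh2 : h ^ 2 = y1 + y2 - y1 * y2) (hy2' : 1 < y2) :
    Filter.Tendsto
      (fun r : ℝ =>
        (1 / (4 * (π : ℂ) * Complex.I)) *
          ∮ ξ in C(0, 1),
            ((ξ + 1 / ((h : ℂ) * r)) * (ξ + (h : ℂ) / r)) /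
              ((ξ + (y2 : ℂ) / ((h : ℂ) * r)) * (ξ + (h : ℂ) / ((y2 : ℂ) * r))) *
            (1 / (ξ - 1 / (r : ℂ)) + 1 / (ξ + 1 / (r : ℂ)) -
              2 / (ξ + (h : ℂ) / ((y2 : ℂ) * r))))
      (𝓝[>] (1 : ℝ)) (𝓝 0) := by
  have hy2 : 0 < y2 := one_pos.trans hy2'
  have hhy2 : h < y2 := by nlinarith [mul_pos hy1 (sub_pos.mpr hy2')]
  refine tendsto_const_nhds.congr' ?_
  filter_upwards [Ioo_mem_nhdsGT ((one_lt_div hh).mpr hhy2)] with r ⟨hr1, hr2⟩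
  have hr : 0 < r := one_pos.trans hr1
  have hc : 1 < y2 / (h * r) := by
    rw [one_lt_div (by positivity)]
    rwa [lt_div_iff₀ hh, mul_comm] at hr2
  have key := circleIntegral_eq_zero_of_mul_eq_sq (u := 1 / ((h : ℂ) * r)) (v := (h : ℂ) / r)
    (a := ((1 / r : ℝ) : ℂ)) (b := ((h / (y2 * r) : ℝ) : ℂ)) (c := ((y2 / (h * r) : ℝ) : ℂ))
    (by rw [norm_real, norm_of_nonneg (by positivity)]; exact (div_lt_one hr).mpr hr1)
    (by rw [norm_real, norm_of_nonneg (by positivity), div_lt_one (by positivity)]; nlinarith)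
    (by rw [norm_real, norm_of_nonneg (by positivity)]; exact hc.ne')
    (by exact_mod_cast (show y2 / (h * r) * (h / (y2 * r)) = (1 / r) ^ 2 by field_simp))
  push_cast at key
  rw [key, mul_zero]

theorem stmt_9 (y1 y2 h : ℝ) (hy1 : 0 < y1) (hy2 : 0 < y2) (hh : 0 < h)
    (hh2 : h ^ 2 = y1 + y2 - y1 * y2) (hy2' : 1 < y2) :
    Filter.Tendsto
      (fun r : ℝ =>
        (1 / (4 * (π : ℂ) * Complex.I)) *
          ∮ ξ in C(0, 1),
            ((ξ + 1 / ((h : ℂ) * r)) * (ξ + (h : ℂ) / r)) /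
              ((ξ + (y2 : ℂ) / ((h : ℂ) * r)) * (ξ + (h : ℂ) / ((y2 : ℂ) * r))) *
            (1 / (ξ - 1 / (r : ℂ)) + 1 / (ξ + 1 / (r : ℂ)) -
              2 / (ξ + (h : ℂ) / ((y2 : ℂ) * r))))
      (𝓝[>] (1 : ℝ)) (𝓝 0) :=
  stmt_9_general y1 y2 h hy1 hh hh2 hy2'
end

section
/- Let $y_1, y_2 > 0$ with $y_2 > 1$, $h = \sqrt{y_1+y_2-y_1y_2} > 0$, so $y_2 > h$. For $1 < r_1 < r_2$ define $g_{r}(\xi) = \frac{(\xi+\frac{1}{hr})(\xi+\frac{h}{r})}{(\xi+\frac{y_2}{hr})(\xi+\frac{h}{y_2 r})}$. Then $\lim_{r_2\downarrow 1}\lim_{r_1\downarrow 1}\, -\frac{1}{2\pi^2}\oint_{|\xi_2|=1}\oint_{|\xi_1|=1} g_{r_1}(\xi_1)\, g_{r_2}(\xi_2)\, \frac{r_1 r_2}{(r_1\xi_1 - r_2\xi_2)^2}\, d\xi_1\, d\xi_2 = \frac{2 h^2 y_1^2 y_2^2}{(y_1+y_2)^4}$. -/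
/-!
Rescaling `u = r ξ` turns `g_r(ξ)` into `g(u) = (u + p)(u + q) / ((u + s)(u + t))` with
`p = 1/h, q = h, s = y₂/h, t = h/y₂`, and the double integral into
`∮_{|u₂| = r₂} ∮_{|u₁| = r₁} g(u₁) g(u₂) / (u₁ - u₂)² du₁ du₂`.
For `|t| < r₁ < r₂ < |s|` the only singularity of the inner integrand inside `|u₁| = r₁` is the
simple pole `-t`, so Cauchy's formula gives `2πi (p - t)(q - t)/(s - t) · g(u₂)/(u₂ + t)²`.
The outer integrand has only the triple pole `-t` inside `|u₂| = r₂`, with residue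
`(p - s)(q - s)/(s - t)³`. Hence the expression equals `2 (p - t)(q - t)(p - s)(q - s)/(s - t)⁴`
for all `1 < r₁ < r₂ < y₂/h`, independently of the radii, and this is `2 h² y₁² y₂² / (y₁ + y₂)⁴`
because `h² = y₁ + y₂ - y₁ y₂`.
-/

open Real Complex Filter Topology Metric Set

theorem circleIntegral_smul_comp_ofReal_mul {E : Type*} [NormedAddCommGroup E] [NormedSpace ℂ E]
    (f : ℂ → E) (r R : ℝ) :
    ∮ z in C(0, R), (r : ℂ) • f (r * z) = ∮ z in C(0, r * R), f z := by
  have hmap : ∀ θ, circleMap 0 (r * R) θ = r * circleMap 0 R θ := fun θ => by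
    simp only [circleMap_zero, ofReal_mul]; ring
  simp only [circleIntegral, deriv_circleMap, hmap, smul_smul]
  congr 1 with θ
  ring_nf

theorem ne_of_norm_lt_norm {E : Type*} [NormedAddCommGroup E] {a b : E} (h : ‖a‖ < ‖b‖) :
    a ≠ b := by
  rintro rfl
  exact h.false

theorem add_ne_zero_of_norm_lt {E : Type*} [NormedAddCommGroup E] {a b : E} (h : ‖a‖ < ‖b‖) :
    a + b ≠ 0 := by
  rw [← sub_neg_eq_add]
  exact sub_ne_zero.2 (ne_of_norm_lt_norm (by rwa [norm_neg]))

theorem circleIntegral_sub_inv_of_lt_norm {R : ℝ} {w : ℂ} (hR : 0 ≤ R) (hw : R < ‖w‖) :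
    ∮ z in C(0, R), (z - w)⁻¹ = 0 := by
  have hd : DifferentiableOn ℂ (fun z : ℂ => (z - w)⁻¹) (closedBall 0 R) := fun z hz =>
    ((differentiableAt_id.sub_const w).inv (sub_ne_zero.2 <| ne_of_norm_lt_norm <|
      (mem_closedBall_zero_iff.1 hz).trans_lt hw)).differentiableWithinAt
  exact (hd.mono closure_ball_subset_closedBall).diffContOnCl.circleIntegral_eq_zero hR

namespace BetaTraceVariance

/-- The paper's `g_r(ξ)` is `g (1/h) h (y₂/h) (h/y₂) (r * ξ)`. -/
noncomputable def g (p q s t z : ℂ) : ℂ := (z + p) * (z + q) / ((z + s) * (z + t))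

theorem g_mul (p q s t ξ : ℂ) {r : ℂ} (hr : r ≠ 0) :
    g p q s t (r * ξ) = (ξ + p / r) * (ξ + q / r) / ((ξ + s / r) * (ξ + t / r)) := by
  have hadd : ∀ c : ℂ, r * ξ + c = r * (ξ + c / r) := fun c => by field_simp
  simp only [g, hadd, mul_mul_mul_comm r, mul_div_mul_left _ _ (mul_ne_zero hr hr)]

variable {p q s t : ℂ} {R : ℝ}

theorem circleIntegral_g_div_sub_sq (ht : ‖t‖ < R) (hs : R < ‖s‖) {w : ℂ} (hw : R < ‖w‖) :
    ∮ z in C(0, R), g p q s t z / (z - w) ^ 2 =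
      2 * π * I * ((p - t) * (q - t) / ((s - t) * (w + t) ^ 2)) := by
  set φ : ℂ → ℂ := fun z => (z + p) * (z + q) / ((z + s) * (z - w) ^ 2)
  have hφ : DifferentiableOn ℂ φ (closedBall 0 R) := by
    intro z hz
    have hz : ‖z‖ < ‖s‖ ∧ ‖z‖ < ‖w‖ :=
      ⟨(mem_closedBall_zero_iff.1 hz).trans_lt hs, (mem_closedBall_zero_iff.1 hz).trans_lt hw⟩
    refine DifferentiableAt.differentiableWithinAt ?_
    refine ((differentiableAt_id.add_const p).mul (differentiableAt_id.add_const q)).div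
      ((differentiableAt_id.add_const s).mul ((differentiableAt_id.sub_const w).pow 2)) ?_
    exact mul_ne_zero (add_ne_zero_of_norm_lt hz.1)
      (pow_ne_zero 2 (sub_ne_zero.2 (ne_of_norm_lt_norm hz.2)))
  have hmem : -t ∈ ball (0 : ℂ) R := by rwa [mem_ball_zero_iff, norm_neg]
  have hform : (fun z => g p q s t z / (z - w) ^ 2) = fun z => (z - -t)⁻¹ • φ z := by
    funext z
    simp only [g, φ, smul_eq_mul, sub_neg_eq_add, div_eq_mul_inv, mul_inv]
    ring
  rw [hform, hφ.circleIntegral_sub_inv_smul hmem, smul_eq_mul]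
  simp only [φ]
  ring

-- The `(z + t)⁻²`, `(z + t)⁻³` coefficients come from the Taylor expansion of
-- `(z + p) * (z + q) / (z + s)` at `-t`; the two simple-pole coefficients are opposite because
-- the left side is `O(z⁻²)` at infinity.
theorem div_mul_pow_three_eq_sum_zpow {z : ℂ} (hzs : z + s ≠ 0) (hzt : z + t ≠ 0)
    (hst : s - t ≠ 0) :
    (z + p) * (z + q) / ((z + s) * (z + t) ^ 3) =
      (p - s) * (q - s) / (s - t) ^ 3 * ((z - -t) ^ (-1 : ℤ) - (z - -s) ^ (-1 : ℤ)) +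
        ((p + q - 2 * t) / (s - t) - (p - t) * (q - t) / (s - t) ^ 2) * (z - -t) ^ (-2 : ℤ) +
        (p - t) * (q - t) / (s - t) * (z - -t) ^ (-3 : ℤ) := by
  simp only [sub_neg_eq_add, zpow_neg, zpow_ofNat]
  field_simp
  ring

theorem circleIntegral_div_mul_pow_three (ht : ‖t‖ < R) (hs : R < ‖s‖) :
    ∮ z in C(0, R), (z + p) * (z + q) / ((z + s) * (z + t) ^ 3) =
      2 * π * I * ((p - s) * (q - s) / (s - t) ^ 3) := by
  have hR : 0 ≤ R := (norm_nonneg t).trans ht.le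
  have hts : -t ∉ sphere (0 : ℂ) |R| := by
    rw [mem_sphere_zero_iff_norm, norm_neg, abs_of_nonneg hR]; exact ht.ne
  have hss : -s ∉ sphere (0 : ℂ) |R| := by
    rw [mem_sphere_zero_iff_norm, norm_neg, abs_of_nonneg hR]; exact hs.ne'
  have hint : ∀ {n : ℤ} {w : ℂ}, w ∉ sphere (0 : ℂ) |R| →
      CircleIntegrable (fun z => (z - w) ^ n) 0 R :=
    fun hw => circleIntegrable_sub_zpow_iff.2 (Or.inr (Or.inr hw))
  have hst : s - t ≠ 0 := sub_ne_zero.2 (ne_of_norm_lt_norm (ht.trans hs)).symm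
  rw [circleIntegral.integral_congr hR fun z hz => div_mul_pow_three_eq_sum_zpow ?_ ?_ hst]
  · have h1 : CircleIntegrable (fun z => (p - s) * (q - s) / (s - t) ^ 3 *
        ((z - -t) ^ (-1 : ℤ) - (z - -s) ^ (-1 : ℤ))) 0 R :=
      ((hint hts).sub (hint hss)).const_smul
    have h2 : CircleIntegrable (fun z =>
        ((p + q - 2 * t) / (s - t) - (p - t) * (q - t) / (s - t) ^ 2) * (z - -t) ^ (-2 : ℤ)) 0 R :=
      (hint hts).const_smul
    have h3 : CircleIntegrable (fun z => (p - t) * (q - t) / (s - t) * (z - -t) ^ (-3 : ℤ)) 0 R :=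
      (hint hts).const_smul
    rw [circleIntegral.integral_add ?_ h3, circleIntegral.integral_add h1 h2]
    · simp only [circleIntegral.integral_const_mul]
      rw [circleIntegral.integral_sub (hint hts) (hint hss),
        circleIntegral.integral_sub_zpow_of_ne (n := -2) (by decide),
        circleIntegral.integral_sub_zpow_of_ne (n := -3) (by decide)]
      simp only [zpow_neg_one]
      rw [circleIntegral.integral_sub_inv_of_mem_ball (by rwa [mem_ball_zero_iff, norm_neg]),
        circleIntegral_sub_inv_of_lt_norm hR (by rwa [norm_neg])]
      ring
    · exact h1.add h2
  · rw [mem_sphere_zero_iff_norm] at hz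
    exact add_ne_zero_of_norm_lt (hz.trans_lt hs)
  · rw [mem_sphere_zero_iff_norm] at hz
    rw [add_comm]
    exact add_ne_zero_of_norm_lt (ht.trans_eq hz.symm)

theorem circleIntegral_g_mul_g_of_mem_sphere {r₁ r₂ : ℝ} (ht : ‖t‖ < r₁) (hr : r₁ < r₂)
    (hs : r₂ < ‖s‖) {ξ₂ : ℂ} (hξ₂ : ξ₂ ∈ sphere (0 : ℂ) 1) :
    ∮ ξ₁ in C(0, 1),
        g p q s t (r₁ * ξ₁) * g p q s t (r₂ * ξ₂) * ((r₁ : ℂ) * r₂ / (r₁ * ξ₁ - r₂ * ξ₂) ^ 2) =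
      (r₂ : ℂ) • (2 * π * I * ((p - t) * (q - t) / (s - t)) *
        ((r₂ * ξ₂ + p) * (r₂ * ξ₂ + q) / ((r₂ * ξ₂ + s) * (r₂ * ξ₂ + t) ^ 3))) := by
  set w : ℂ := r₂ * ξ₂
  have hw : r₁ < ‖w‖ := by
    rw [norm_mul, mem_sphere_zero_iff_norm.1 hξ₂, norm_real, Real.norm_eq_abs,
      abs_of_pos ((norm_nonneg t).trans_lt (ht.trans hr)), mul_one]
    exact hr
  calc _ = ∮ ξ₁ in C(0, 1),
        (r₁ : ℂ) • (r₂ * g p q s t w * (g p q s t (r₁ * ξ₁) / (r₁ * ξ₁ - w) ^ 2)) := by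
        congr 1 with ξ₁
        rw [smul_eq_mul]
        ring
    _ = r₂ * g p q s t w * (2 * π * I * ((p - t) * (q - t) / ((s - t) * (w + t) ^ 2))) := by
        rw [circleIntegral_smul_comp_ofReal_mul
            (fun z => r₂ * g p q s t w * (g p q s t z / (z - w) ^ 2)),
          mul_one, circleIntegral.integral_const_mul,
          circleIntegral_g_div_sub_sq ht (hr.trans hs) hw]
    _ = _ := by
        simp only [g, smul_eq_mul, div_eq_mul_inv, mul_inv, ← inv_pow]
        ring

theorem circleIntegral_circleIntegral_g_mul_g {r₁ r₂ : ℝ} (ht : ‖t‖ < r₁) (hr : r₁ < r₂)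
    (hs : r₂ < ‖s‖) :
    ∮ ξ₂ in C(0, 1), ∮ ξ₁ in C(0, 1),
      g p q s t (r₁ * ξ₁) * g p q s t (r₂ * ξ₂) * ((r₁ : ℂ) * r₂ / (r₁ * ξ₁ - r₂ * ξ₂) ^ 2) =
      (2 * π * I) ^ 2 * ((p - t) * (q - t) * (p - s) * (q - s) / (s - t) ^ 4) := by
  rw [circleIntegral.integral_congr zero_le_one
      fun ξ₂ hξ₂ => circleIntegral_g_mul_g_of_mem_sphere ht hr hs hξ₂,
    circleIntegral_smul_comp_ofReal_mul (fun w => 2 * π * I * ((p - t) * (q - t) / (s - t)) *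
      ((w + p) * (w + q) / ((w + s) * (w + t) ^ 3))), mul_one,
    circleIntegral.integral_const_mul, circleIntegral_div_mul_pow_three (ht.trans hr) hs]
  simp only [div_eq_mul_inv, ← inv_pow]
  ring

theorem add_div_mul_add_div_eq_g (h y r : ℝ) (hr : r ≠ 0) (ξ : ℂ) :
    (ξ + 1 / ((h : ℂ) * r)) * (ξ + (h : ℂ) / r) /
        ((ξ + (y : ℂ) / ((h : ℂ) * r)) * (ξ + (h : ℂ) / ((y : ℂ) * r))) =
      g (1 / h) h (y / h) (h / y) (r * ξ) := by
  rw [g_mul _ _ _ _ _ (ofReal_ne_zero.2 hr)]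
  simp only [div_div]

theorem residue_product_eq {y₁ y₂ h : ℂ} (hh : h ^ 2 = y₁ + y₂ - y₁ * y₂) (h0 : h ≠ 0)
    (hy₂ : y₂ ≠ 0) (hy₂1 : y₂ - 1 ≠ 0) (hy : y₁ + y₂ ≠ 0) :
    (1 / h - h / y₂) * (h - h / y₂) * (1 / h - y₂ / h) * (h - y₂ / h) / (y₂ / h - h / y₂) ^ 4 =
      h ^ 2 * y₁ ^ 2 * y₂ ^ 2 / (y₁ + y₂) ^ 4 := by
  have hst : y₂ / h - h / y₂ = (y₂ - 1) * (y₁ + y₂) / (h * y₂) := by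
    field_simp; linear_combination -hh
  have hpt : 1 / h - h / y₂ = y₁ * (y₂ - 1) / (h * y₂) := by
    field_simp; linear_combination -hh
  have hqs : h - y₂ / h = -(y₁ * (y₂ - 1)) / h := by
    field_simp; linear_combination hh
  rw [hst, hpt, hqs]
  field_simp
  ring

end BetaTraceVariance

open BetaTraceVariance in
/-- The Gaussian part of the asymptotic variance of `tr(B_n)` in the case `y₂ > 1`:
the iterated limit `r₁ ↓ 1` then `r₂ ↓ 1` of the double contour integral equals
`2 h² y₁² y₂² / (y₁ + y₂)⁴`.  The iterated limit is rendered via an arbitrary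
function `L` recording the inner limits. -/
theorem stmt_12 (y1 y2 h : ℝ) (hy1 : 0 < y1) (hy2 : 1 < y2) (hh : 0 < h)
    (hh2 : h ^ 2 = y1 + y2 - y1 * y2) (L : ℝ → ℂ)
    (hL : ∀ r2 : ℝ, 1 < r2 →
      Filter.Tendsto
        (fun r1 : ℝ =>
          (-(1 / (2 * (π : ℂ) ^ 2))) *
            ∮ ξ2 in C(0, 1),
              (∮ ξ1 in C(0, 1),
                ((ξ1 + 1 / ((h : ℂ) * r1)) * (ξ1 + (h : ℂ) / r1)) /
                    ((ξ1 + (y2 : ℂ) / ((h : ℂ) * r1)) * (ξ1 + (h : ℂ) / ((y2 : ℂ) * r1))) *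
                  (((ξ2 + 1 / ((h : ℂ) * r2)) * (ξ2 + (h : ℂ) / r2)) /
                    ((ξ2 + (y2 : ℂ) / ((h : ℂ) * r2)) * (ξ2 + (h : ℂ) / ((y2 : ℂ) * r2)))) *
                  ((r1 : ℂ) * (r2 : ℂ) / ((r1 : ℂ) * ξ1 - (r2 : ℂ) * ξ2) ^ 2)))
        (𝓝[>] (1 : ℝ)) (𝓝 (L r2))) :
    Filter.Tendsto L (𝓝[>] (1 : ℝ))
      (𝓝 (2 * (h : ℂ) ^ 2 * (y1 : ℂ) ^ 2 * (y2 : ℂ) ^ 2 / ((y1 : ℂ) + (y2 : ℂ)) ^ 4)) := by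
  have hhy : h < y2 := by nlinarith
  have hy0 : 0 < y2 := by linarith
  have ht : ‖(h : ℂ) / y2‖ < 1 := by
    rw [← ofReal_div, norm_real, Real.norm_eq_abs, abs_of_pos (by positivity)]
    exact (div_lt_one hy0).2 hhy
  have hs : ‖(y2 : ℂ) / h‖ = y2 / h := by
    rw [← ofReal_div, norm_real, Real.norm_eq_abs, abs_of_pos (by positivity)]
  have hhc : (h : ℂ) ^ 2 = y1 + y2 - y1 * y2 := by exact_mod_cast hh2
  refine tendsto_const_nhds.congr' <|
    eventuallyEq_of_mem (Ioo_mem_nhdsGT ((one_lt_div hh).2 hhy)) fun r₂ hr₂ => ?_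
  refine (tendsto_nhds_unique (hL r₂ hr₂.1) (tendsto_const_nhds.congr' ?_)).symm
  filter_upwards [Ioo_mem_nhdsGT hr₂.1] with r₁ hr₁
  simp only [add_div_mul_add_div_eq_g h y2 r₁ (by linarith [hr₁.1]),
    add_div_mul_add_div_eq_g h y2 r₂ (by linarith [hr₂.1])]
  rw [circleIntegral_circleIntegral_g_mul_g (ht.trans hr₁.1) hr₁.2 (hs ▸ hr₂.2),
    residue_product_eq hhc (ofReal_ne_zero.2 hh.ne') (ofReal_ne_zero.2 hy0.ne')
      (by exact_mod_cast (sub_pos.2 hy2).ne') (by exact_mod_cast (add_pos hy1 hy0).ne'),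
    mul_pow, I_sq]
  field_simp
end

section
/- Let $h, y_2 > 0$ with $h \neq y_2$, and define $F(\xi) = \frac{\xi(\xi + \frac{1}{h})(\xi + \frac{h}{1})}{\xi + \frac{y_2}{h}}$ where $h^2 = y_1 + y_2 - y_1 y_2$ for some $y_1 > 0$. Then $\frac{1}{6} F'''\left(-\frac{h}{y_2}\right) = \frac{h\, y_1 y_2^5}{(1-y_2)^2 (y_1+y_2)^4} \cdot \frac{1}{1}$, i.e., the third derivative of $\xi \mapsto \frac{\xi(\xi+\frac{1}{h})(\xi+h)}{\xi+\frac{y_2}{h}}$ evaluated at $\xi = -h/y_2$, divided by 6, equals $\frac{h y_1 y_2^5}{(1-y_2)^2(y_1+y_2)^4}$. -/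
/-!
Division with remainder by `ξ + c` writes `ξ (ξ + a) (ξ + b) / (ξ + c)` as a quadratic plus
`R / (ξ + c)` with `R = -c (a - c) (b - c)`, the value of the numerator at the pole. The
quadratic dies under three derivatives, so the third derivative is `-6 R / (ξ + c) ^ 4`.
With `a = 1 / h`, `b = h`, `c = y₂ / h` and `ξ = -h / y₂`, the relation
`h² = y₁ + y₂ - y₁ y₂` gives `R = -y₁ y₂ (1 - y₂)² / h³` and
`ξ + c = (y₂² - h²) / (h y₂) = (y₁ + y₂) (y₂ - 1) / (h y₂)`.
-/

open scoped Nat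

section

variable {𝕜 : Type*} [NontriviallyNormedField 𝕜]

theorem iteratedDeriv_inv_add_const (n : ℕ) (c p : 𝕜) :
    iteratedDeriv n (fun x : 𝕜 => (x + c)⁻¹) p = (-1) ^ n * n ! * (p + c) ^ (-1 - n : ℤ) := by
  rw [iteratedDeriv_comp_add_const (f := Inv.inv), iteratedDeriv_eq_iterate]
  exact iter_deriv_inv n (p + c)

theorem iteratedDeriv_three_quadratic (a b d : 𝕜) :
    iteratedDeriv 3 (fun x : 𝕜 => a * x ^ 2 + b * x + d) = 0 := by
  have h1 : deriv (fun x : 𝕜 => a * x ^ 2 + b * x + d) = fun x => 2 * a * x + b := by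
    ext x
    refine ((((hasDerivAt_pow 2 x).const_mul a).fun_add
      ((hasDerivAt_id x).const_mul b)).add_const d).deriv.trans ?_
    simp only [Nat.cast_ofNat, mul_one]
    ring
  have h2 : deriv (fun x : 𝕜 => 2 * a * x + b) = fun _ => 2 * a := by
    ext x
    simp
  simp only [iteratedDeriv_succ, iteratedDeriv_zero, h1, h2, deriv_const']
  rfl

theorem iteratedDeriv_three_quadratic_add_mul_inv {p c : 𝕜} (hp : p + c ≠ 0) (a b d r : 𝕜) :
    iteratedDeriv 3 (fun x : 𝕜 => a * x ^ 2 + b * x + d + r * (x + c)⁻¹) p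
      = -6 * r / (p + c) ^ 4 := by
  rw [iteratedDeriv_fun_add (by fun_prop) (by fun_prop (disch := assumption)),
    iteratedDeriv_three_quadratic, iteratedDeriv_const_mul_field, iteratedDeriv_inv_add_const]
  norm_num
  ring

theorem cubic_div_linear_eq {x c : 𝕜} (hx : x + c ≠ 0) (a b : 𝕜) :
    x * (x + a) * (x + b) / (x + c) = x ^ 2 + (a + b - c) * x + (a * b - (a + b - c) * c)
      + (-(c * (a - c) * (b - c))) * (x + c)⁻¹ := by
  field_simp
  ring

theorem iteratedDeriv_three_cubic_div_linear {p c : 𝕜} (hp : p + c ≠ 0) (a b : 𝕜) :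
    iteratedDeriv 3 (fun x : 𝕜 => x * (x + a) * (x + b) / (x + c)) p
      = 6 * (c * (a - c) * (b - c)) / (p + c) ^ 4 := by
  have hpole : ∀ᶠ x in nhds p, x + c ≠ 0 :=
    (continuous_add_const c).continuousAt.eventually_ne hp
  have hsplit : (fun x : 𝕜 => x * (x + a) * (x + b) / (x + c)) =ᶠ[nhds p]
      fun x => 1 * x ^ 2 + (a + b - c) * x + (a * b - (a + b - c) * c)
        + (-(c * (a - c) * (b - c))) * (x + c)⁻¹ :=
    hpole.mono fun x hx => by simpa only [one_mul] using cubic_div_linear_eq hx a b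
  rw [hsplit.iteratedDeriv_eq 3, iteratedDeriv_three_quadratic_add_mul_inv hp]
  ring

end

theorem stmt_18_general (y1 y2 h : ℝ) (hy2 : 0 < y2)
    (hh : 0 < h) (hh2 : h ^ 2 = y1 + y2 - y1 * y2) (hhy : h ≠ y2) :
    iteratedDeriv 3 (fun ξ : ℝ => ξ * (ξ + 1 / h) * (ξ + h) / (ξ + y2 / h))
        (-(h / y2)) / 6 =
      h * y1 * y2 ^ 5 / ((1 - y2) ^ 2 * (y1 + y2) ^ 4) := by
  have hfactor : (y1 + y2) * (y2 - 1) ≠ 0 := by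
    rw [show (y1 + y2) * (y2 - 1) = y2 ^ 2 - h ^ 2 by linear_combination hh2]
    exact sub_ne_zero.mpr fun e => hhy ((pow_left_inj₀ hh.le hy2.le two_ne_zero).mp e.symm)
  have hpole : -(h / y2) + y2 / h = (y1 + y2) * (y2 - 1) / (h * y2) := by
    field_simp
    linear_combination -hh2
  have hresidue : y2 / h * (1 / h - y2 / h) * (h - y2 / h) = y1 * y2 * (1 - y2) ^ 2 / h ^ 3 := by
    field_simp
    linear_combination (1 - y2) * hh2
  obtain ⟨hy1y2, hy2_ne_one⟩ := mul_ne_zero_iff.mp hfactor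
  have hone_sub_y2 : 1 - y2 ≠ 0 := by rwa [← neg_sub, neg_ne_zero]
  rw [iteratedDeriv_three_cubic_div_linear (by rw [hpole]; positivity), hresidue, hpole]
  field_simp
  ring

theorem stmt_18 (y1 y2 h : ℝ) (hy1 : 0 < y1) (hy2 : 0 < y2) (hy2' : y2 ≠ 1)
    (hh : 0 < h) (hh2 : h ^ 2 = y1 + y2 - y1 * y2) (hhy : h ≠ y2) :
    iteratedDeriv 3 (fun ξ : ℝ => ξ * (ξ + 1 / h) * (ξ + h) / (ξ + y2 / h))
        (-(h / y2)) / 6 =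
      h * y1 * y2 ^ 5 / ((1 - y2) ^ 2 * (y1 + y2) ^ 4) :=
  stmt_18_general y1 y2 h hy2 hh hh2 hhy
end
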